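/- arXiv:2505.07115 — 7 statements merged into one kernel-verified Lean document; each statement's English description precedes it below -/
import Mathlib

section
/- Let B be a skew brace of nilpotent type (i.e. (B,+) is a nilpotent group) such that B³ = 0. Then B is centrally nilpotent, i.e. there exists a chain of ideals 0 = I₀ ≤ I₁ ≤ … ≤ Iₙ = B such that I_j/I_{j−1} ≤ ζ(B/I_{j−1}) for every 1 ≤ j ≤ n, where ζ denotes the centre of a skew brace. -/
/-- A (left) skew brace: a set with two group structures `(B,+)` and `(B,·)`
satisfying `a·(b+c) = a·b - a + a·c`. -/
class SkewBrace (B : Type*) extends AddGroup B, Group B where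
  mul_add_compat : ∀ a b c : B, a * (b + c) = a * b - a + a * c

namespace SkewBrace

variable {B : Type*} [SkewBrace B]

/-- The star product `a ∗ b = -a + a·b - b`. -/
def star (a b : B) : B := -a + a * b - b

/-- For subsets `X, Y ⊆ B`, `X ∗ Y` is the additive subgroup generated by
all `x ∗ y` with `x ∈ X`, `y ∈ Y`. -/
def starSet (X Y : Set B) : AddSubgroup B :=
  AddSubgroup.closure (Set.image2 star X Y)

/-- The left series, indexed so that `leftSeries B n = B^{n+1}`:
`leftSeries B 0 = B¹ = B` and `leftSeries B (n+1) = B ∗ leftSeries B n`. -/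
def leftSeries (B : Type*) [SkewBrace B] : ℕ → AddSubgroup B
  | 0 => ⊤
  | n + 1 => starSet Set.univ (leftSeries B n)

/-- The right series, indexed so that `rightSeries B n = B^{(n+1)}`:
`rightSeries B 0 = B^{(1)} = B` and `rightSeries B (n+1) = (rightSeries B n) ∗ B`. -/
def rightSeries (B : Type*) [SkewBrace B] : ℕ → AddSubgroup B
  | 0 => ⊤
  | n + 1 => starSet (rightSeries B n : Set B) Set.univ

end SkewBrace

namespace SkewBrace

variable {B : Type*} [SkewBrace B]

/-- An ideal of a skew brace `B`: a normal subgroup of `(B,+)` with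
`I ∗ B ⊆ I` and `B ∗ I ⊆ I`. -/
def IsIdeal (I : AddSubgroup B) : Prop :=
  (∀ i ∈ I, ∀ b : B, b + i - b ∈ I) ∧
  (∀ i ∈ I, ∀ b : B, star i b ∈ I) ∧
  (∀ i ∈ I, ∀ b : B, star b i ∈ I)

/-- `B` is centrally nilpotent: there is a chain of ideals
`0 = I₀ ≤ I₁ ≤ … ≤ Iₙ = B` with `I_{j+1}/I_j ≤ ζ(B/I_j)`, i.e. for every
`x ∈ I_{j+1}` and `a ∈ B` the elements `a ∗ x`, `x ∗ a` and `[a,x]₊` lie in `I_j`. -/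
def CentrallyNilpotent (B : Type*) [SkewBrace B] : Prop :=
  ∃ (n : ℕ) (I : ℕ → AddSubgroup B),
    I 0 = ⊥ ∧ I n = ⊤ ∧
    (∀ j, IsIdeal (I j)) ∧
    (∀ j, j < n → I j ≤ I (j + 1)) ∧
    (∀ j, j < n → ∀ x ∈ I (j + 1), ∀ a : B,
      star a x ∈ I j ∧ star x a ∈ I j ∧ (-a + -x + a + x) ∈ I j)

end SkewBrace

/-!
Write `A = B ∗ B`. The hypothesis `B ∗ A = 0` says that `λ` fixes `A` pointwise, so on `A` the two
group laws agree, `z ↦ z ∗ d` is an anti-homomorphism on `A`, and the star of a multiplicative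
commutator `x b x⁻¹ b⁻¹` is an additive commutator of `b ∗ d` and `x ∗ d`.

Let `D₀ = A` and let `Dₙ₊₁` be the additive normal closure of the multiplicative commutators of
`Dₙ` with `B`. The `Dₙ` are ideals, and `Dₙ ∗ B` lies in the `n`-th term of the lower central
series of `(A, +)`. Once that term vanishes (after `N` steps, `(B, +)` being nilpotent), elements
of `D_N` have trivial `λ`, their multiplicative commutators are additive ones, and so `D_{2N} = 0`.
Modulo `Dᵢ₊₁` one has `z ∗ b ≡ ⁅-z, b⁆` for `z ∈ Dᵢ`, so intersecting `Dᵢ` with the lower central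
series of `(B, +)` refines `Dᵢ₊₁ ≤ Dᵢ` into central steps. The same refinement works for
`A ≤ B`, because every star lies in `A`.
-/

theorem AddGroup.isNilpotent_of_isNilpotent_multiplicative {G : Type*} [AddGroup G]
    [Group.IsNilpotent (Multiplicative G)] : AddGroup.IsNilpotent G := by
  have h (n : ℕ) : AddSubgroup.upperCentralSeries G n =
      (Subgroup.upperCentralSeries (Multiplicative G) n).toAddSubgroup' := by
    induction n with
    | zero => rfl
    | succ n ih => ext x; rw [AddSubgroup.mem_upperCentralSeries_succ_iff, ih]; rfl
  obtain ⟨n, hn⟩ := Group.IsNilpotent.nilpotent (Multiplicative G)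
  exact ⟨n, by rw [h, hn, OrderIso.map_top]⟩

namespace SkewBrace

open AddSubgroup
open scoped addCommutatorElement

variable {B : Type*} [SkewBrace B]

local infixl:70 " ∗ " => SkewBrace.star

/-- The map `λ_a` of the skew brace; `a ↦ λ_a` is an action of `(B,·)` on `(B,+)`. -/
def lam (a b : B) : B := -a + a * b

theorem mul_eq_add_lam (a b : B) : a * b = a + lam a b := by
  rw [lam, add_neg_cancel_left]

theorem lam_eq_star_add (a b : B) : lam a b = a ∗ b + b := by
  rw [SkewBrace.star, lam, sub_add_cancel]

theorem lam_add (a b c : B) : lam a (b + c) = lam a b + lam a c := by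
  simp only [lam, mul_add_compat, sub_eq_add_neg, add_assoc]

theorem lam_zero (a : B) : lam a 0 = 0 := by
  simpa using lam_add a 0 0

theorem lam_neg (a b : B) : lam a (-b) = -lam a b :=
  eq_neg_of_add_eq_zero_left (by rw [← lam_add, neg_add_cancel, lam_zero])

theorem one_eq_zero : (1 : B) = 0 := by
  have h := mul_add_compat (1 : B) 0 0
  simp only [one_mul, add_zero, zero_sub] at h
  exact neg_eq_zero.mp h.symm

theorem lam_mul (a b c : B) : lam (a * b) c = lam a (lam b c) := by
  rw [show lam b c = -b + b * c from rfl, lam_add, lam_neg]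
  simp only [lam, mul_assoc]
  add_group

theorem lam_inv_self (a : B) : lam a a⁻¹ = -a := by
  rw [lam, mul_inv_cancel, one_eq_zero, add_zero]

theorem star_zero_left (d : B) : (0 : B) ∗ d = 0 := by
  rw [SkewBrace.star, ← one_eq_zero, one_mul, one_eq_zero]
  add_group

theorem star_zero_right (a : B) : a ∗ 0 = 0 := by
  rw [SkewBrace.star, mul_eq_add_lam, lam_zero]
  add_group

theorem star_add_right (a b c : B) : a ∗ (b + c) = a ∗ b + b + a ∗ c - b := by
  simp only [SkewBrace.star, mul_add_compat]
  add_group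

theorem mul_conj_eq (c x : B) : c * x * c⁻¹ = c + (lam c x + lam c (x ∗ c⁻¹)) + -c := by
  rw [mul_assoc, mul_eq_add_lam c, mul_eq_add_lam x, lam_eq_star_add x, lam_add, lam_add,
    lam_inv_self]
  add_group

namespace IsIdeal

variable {I : AddSubgroup B}

theorem of_normal [I.Normal] (hr : ∀ x ∈ I, ∀ b, x ∗ b ∈ I) (hl : ∀ x ∈ I, ∀ b, b ∗ x ∈ I) :
    IsIdeal I :=
  ⟨fun x hx b => by simpa only [sub_eq_add_neg] using Normal.conj_mem ‹_› x hx b, hr, hl⟩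

theorem normal (hI : IsIdeal I) : I.Normal :=
  ⟨fun x hx b => by simpa only [sub_eq_add_neg] using hI.1 x hx b⟩

theorem lam_mem (hI : IsIdeal I) {x : B} (hx : x ∈ I) (a : B) : lam a x ∈ I := by
  rw [lam_eq_star_add]
  exact add_mem (hI.2.2 x hx a) hx

theorem mul_mem (hI : IsIdeal I) {x y : B} (hx : x ∈ I) (hy : y ∈ I) : x * y ∈ I := by
  rw [mul_eq_add_lam]
  exact add_mem hx (hI.lam_mem hy x)

theorem inv_mem (hI : IsIdeal I) {x : B} (hx : x ∈ I) : x⁻¹ ∈ I := by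
  have h : x⁻¹ = lam x⁻¹ (-x) := by
    rw [lam_neg, lam, inv_mul_cancel, one_eq_zero]
    add_group
  rw [h]
  exact hI.lam_mem (neg_mem hx) _

theorem mul_conj_mem (hI : IsIdeal I) {x : B} (hx : x ∈ I) (c : B) : c * x * c⁻¹ ∈ I := by
  rw [mul_conj_eq]
  exact hI.normal.conj_mem _ (add_mem (hI.lam_mem hx c) (hI.lam_mem (hI.2.1 x hx _) c)) c

theorem mul_commutator_mem (hI : IsIdeal I) {x : B} (hx : x ∈ I) (b : B) :
    x * b * x⁻¹ * b⁻¹ ∈ I := by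
  rw [show x * b * x⁻¹ * b⁻¹ = x * (b * x⁻¹ * b⁻¹) by group]
  exact hI.mul_mem hx (hI.mul_conj_mem (hI.inv_mem hx) b)

end IsIdeal

theorem isIdeal_bot : IsIdeal (⊥ : AddSubgroup B) :=
  .of_normal (fun x hx b => by rw [mem_bot.mp hx, star_zero_left]; exact zero_mem _)
    (fun x hx b => by rw [mem_bot.mp hx, star_zero_right]; exact zero_mem _)

theorem star_mem_leftSeries_one (a b : B) : a ∗ b ∈ leftSeries B 1 :=
  subset_closure (Set.mem_image2_of_mem trivial trivial)

instance leftSeries_one_normal : (leftSeries B 1).Normal := by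
  have h : leftSeries B 1 ≤ (leftSeries B 1).normalCore := by
    refine (closure_le _).mpr ?_
    rintro _ ⟨x, -, y, -, rfl⟩ b
    have e : b + x ∗ y + -b = -(x ∗ b) + x ∗ (b + y) := by
      rw [star_add_right]
      add_group
    rw [e]
    exact add_mem (neg_mem (star_mem_leftSeries_one x b)) (star_mem_leftSeries_one x _)
  exact le_antisymm (normalCore_le _) h ▸ normalCore_normal _

theorem isIdeal_leftSeries_one : IsIdeal (leftSeries B 1) :=
  .of_normal (fun x _ b => star_mem_leftSeries_one x b) (fun x _ b => star_mem_leftSeries_one b x)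

def mulCommutatorSeries (B : Type*) [SkewBrace B] : ℕ → AddSubgroup B
  | 0 => leftSeries B 1
  | n + 1 => normalClosure {y | ∃ x ∈ mulCommutatorSeries B n, ∃ b : B, y = x * b * x⁻¹ * b⁻¹}

instance mulCommutatorSeries_normal : ∀ n, (mulCommutatorSeries B n).Normal
  | 0 => leftSeries_one_normal
  | _ + 1 => normalClosure_normal

theorem mulCommutator_mem_mulCommutatorSeries_succ {n : ℕ} {x : B}
    (hx : x ∈ mulCommutatorSeries B n) (b : B) :
    x * b * x⁻¹ * b⁻¹ ∈ mulCommutatorSeries B (n + 1) :=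
  subset_normalClosure ⟨x, hx, b, rfl⟩

theorem mulCommutatorSeries_le_leftSeries_one : ∀ n, mulCommutatorSeries B n ≤ leftSeries B 1
  | 0 => le_rfl
  | n + 1 => normalClosure_le_normal <| by
    rintro _ ⟨x, hx, b, rfl⟩
    exact isIdeal_leftSeries_one.mul_commutator_mem (mulCommutatorSeries_le_leftSeries_one n hx) b

/-- The chains of `CentrallyNilpotent`, from `I` up to the second index, built by adding central
steps on top. -/
inductive CentralSeries (I : AddSubgroup B) : AddSubgroup B → Prop
  | refl : CentralSeries I I
  | snoc {J K : AddSubgroup B} : CentralSeries I J → IsIdeal K → J ≤ K →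
      (∀ x ∈ K, ∀ a : B, a ∗ x ∈ J ∧ x ∗ a ∈ J ∧ -a + -x + a + x ∈ J) → CentralSeries I K

namespace CentralSeries

theorem trans {I J K : AddSubgroup B} (h₁ : CentralSeries I J) (h₂ : CentralSeries J K) :
    CentralSeries I K := by
  induction h₂ with
  | refl => exact h₁
  | snoc _ hK hle hcent ih => exact ih.snoc hK hle hcent

theorem of_succ (F : ℕ → AddSubgroup B) (hF : ∀ k, CentralSeries (F (k + 1)) (F k)) :
    ∀ n, CentralSeries (F n) (F 0)
  | 0 => refl
  | n + 1 => (hF n).trans (of_succ F hF n)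

theorem exists_seq {I J : AddSubgroup B} (hI : IsIdeal I) (h : CentralSeries I J) :
    ∃ (n : ℕ) (F : ℕ → AddSubgroup B), F 0 = I ∧ F n = J ∧ (∀ j, IsIdeal (F j)) ∧
      (∀ j, j < n → F j ≤ F (j + 1)) ∧
      (∀ j, j < n → ∀ x ∈ F (j + 1), ∀ a : B,
        a ∗ x ∈ F j ∧ x ∗ a ∈ F j ∧ (-a + -x + a + x) ∈ F j) := by
  induction h with
  | refl => exact ⟨0, fun _ => I, rfl, rfl, fun _ => hI, by simp, by simp⟩
  | @snoc J K _ hK hle hcent ih =>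
    obtain ⟨n, F, h0, hn, hid, hmono, hc⟩ := ih
    refine ⟨n + 1, fun j => if j ≤ n then F j else K, by simpa using h0, by simp,
      fun j => ?_, fun j hj => ?_, fun j hj => ?_⟩
    · dsimp only
      split_ifs
      exacts [hid j, hK]
    · rcases (Nat.lt_succ_iff_lt_or_eq.mp hj) with hj | rfl
      · simpa [hj.le, Nat.succ_le_of_lt hj] using hmono j hj
      · simpa [hn] using hle
    · rcases (Nat.lt_succ_iff_lt_or_eq.mp hj) with hj | rfl
      · simpa [hj.le, Nat.succ_le_of_lt hj] using hc j hj
      · simpa [hn] using hcent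

/-- The chain `L ⊔ (U ⊓ γₖ)`, with `γ` the lower central series of `(B, +)`: its additive
commutator condition holds automatically, so only the stars need checking. -/
theorem of_lowerCentralSeries {L U : AddSubgroup B} [L.Normal] [U.Normal] (hLU : L ≤ U)
    {N : ℕ} (hN : (⊤ : AddSubgroup B).lowerCentralSeries N = ⊥)
    (hstar : ∀ k, ∀ x ∈ L ⊔ U ⊓ (⊤ : AddSubgroup B).lowerCentralSeries k, ∀ a,
      a ∗ x ∈ L ⊔ U ⊓ (⊤ : AddSubgroup B).lowerCentralSeries (k + 1) ∧
      x ∗ a ∈ L ⊔ U ⊓ (⊤ : AddSubgroup B).lowerCentralSeries (k + 1)) :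
    CentralSeries L U := by
  set F : ℕ → AddSubgroup B := fun k => L ⊔ U ⊓ (⊤ : AddSubgroup B).lowerCentralSeries k
  have hanti (k : ℕ) : F (k + 1) ≤ F k :=
    sup_le_sup_left (inf_le_inf_left _ (AddSubgroup.lowerCentralSeries_antitone _ k.le_succ)) _
  have hcomm (k : ℕ) : ∀ x ∈ F k, ∀ a, -a + -x + a + x ∈ F (k + 1) := by
    intro x hx a
    obtain ⟨p, hp, q, hq, rfl⟩ := mem_sup_of_normal_left.mp hx
    have h : -a + -(p + q) + a + (p + q) = ⁅-a, -q⁆ + (-q + ⁅-a, -p⁆ + -(-q)) := by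
      simp only [addCommutatorElement_def]
      add_group
    rw [h]
    refine add_mem (mem_sup_right ⟨?_, ?_⟩) (mem_sup_left ?_)
    · exact addCommutator_le_right ⊤ U (addCommutator_mem_addCommutator (mem_top _) (neg_mem hq.1))
    · rw [AddSubgroup.lowerCentralSeries_succ, addCommutator_comm]
      exact addCommutator_mem_addCommutator (mem_top _) (neg_mem hq.2)
    · exact Normal.conj_mem inferInstance _
        (addCommutator_le_right ⊤ L (addCommutator_mem_addCommutator (mem_top _) (neg_mem hp))) _
  have hstep (k : ℕ) : CentralSeries (F (k + 1)) (F k) :=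
    refl.snoc (.of_normal (fun x hx b => hanti k (hstar k x hx b).2)
        (fun x hx b => hanti k (hstar k x hx b).1)) (hanti k)
      fun x hx a => ⟨(hstar k x hx a).1, (hstar k x hx a).2, hcomm k x hx a⟩
  simpa [F, hN, hLU] using of_succ F hstep N

end CentralSeries

theorem centrallyNilpotent_of_centralSeries (h : CentralSeries (⊥ : AddSubgroup B) ⊤) :
    CentrallyNilpotent B :=
  h.exists_seq isIdeal_bot

theorem centralSeries_leftSeries_one_top {N : ℕ}
    (hN : (⊤ : AddSubgroup B).lowerCentralSeries N = ⊥) :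
    CentralSeries (leftSeries B 1) ⊤ :=
  .of_lowerCentralSeries le_top hN fun _ x _ a =>
    ⟨mem_sup_left (star_mem_leftSeries_one a x), mem_sup_left (star_mem_leftSeries_one x a)⟩

section LeftClassTwo

variable (h3 : leftSeries B 2 = ⊥)
include h3

theorem star_eq_zero_of_mem {z : B} (hz : z ∈ leftSeries B 1) (a : B) : a ∗ z = 0 := by
  have h : a ∗ z ∈ leftSeries B 2 := subset_closure (Set.mem_image2_of_mem trivial hz)
  rwa [h3, mem_bot] at h

theorem lam_of_mem {z : B} (hz : z ∈ leftSeries B 1) (a : B) : lam a z = z := by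
  rw [lam_eq_star_add, star_eq_zero_of_mem h3 hz, zero_add]

theorem mul_of_mem {z : B} (hz : z ∈ leftSeries B 1) (a : B) : a * z = a + z := by
  rw [mul_eq_add_lam, lam_of_mem h3 hz]

theorem inv_of_mem {z : B} (hz : z ∈ leftSeries B 1) : z⁻¹ = -z :=
  inv_eq_of_mul_eq_one_right (by rw [mul_of_mem h3 (neg_mem hz), add_neg_cancel, one_eq_zero])

theorem star_mul_left (u v d : B) : (u * v) ∗ d = v ∗ d + u ∗ d := by
  have h : lam (u * v) d = v ∗ d + lam u d := by
    rw [lam_mul, lam_eq_star_add v, lam_add, lam_of_mem h3 (star_mem_leftSeries_one v d)]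
  rw [SkewBrace.star, ← lam, h, lam_eq_star_add]
  add_group

theorem star_inv_left (u d : B) : u⁻¹ ∗ d = -(u ∗ d) := by
  have h := star_mul_left h3 u u⁻¹ d
  rw [mul_inv_cancel, one_eq_zero, star_zero_left] at h
  exact eq_neg_of_add_eq_zero_left h.symm

theorem star_add_left {y : B} (hy : y ∈ leftSeries B 1) (x d : B) :
    (x + y) ∗ d = y ∗ d + x ∗ d := by
  rw [← mul_of_mem h3 hy, star_mul_left h3]

theorem star_neg_left {x : B} (hx : x ∈ leftSeries B 1) (d : B) : (-x) ∗ d = -(x ∗ d) := by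
  rw [← inv_of_mem h3 hx, star_inv_left h3]

theorem star_addCommutator {u v : B} (hu : u ∈ leftSeries B 1) (hv : v ∈ leftSeries B 1)
    (d : B) : ⁅u, v⁆ ∗ d = ⁅-(v ∗ d), -(u ∗ d)⁆ := by
  rw [addCommutatorElement_def, star_add_left h3 (neg_mem hv), star_add_left h3 (neg_mem hu),
    star_add_left h3 hv, star_neg_left h3 hu,
    star_neg_left h3 hv, addCommutatorElement_def]
  add_group

theorem star_mulCommutator (x b d : B) : (x * b * x⁻¹ * b⁻¹) ∗ d = ⁅-(b ∗ d), -(x ∗ d)⁆ := by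
  rw [star_mul_left h3, star_mul_left h3, star_mul_left h3, star_inv_left h3, star_inv_left h3,
    addCommutatorElement_def]
  add_group

theorem star_mul_conj (c y d : B) : (c * y * c⁻¹) ∗ d = -(c ∗ d) + y ∗ d + c ∗ d := by
  rw [star_mul_left h3, star_mul_left h3, star_inv_left h3, add_assoc]

theorem mul_conj_of_mem {y : B} (hy : y ∈ leftSeries B 1) (c : B) :
    c * y * c⁻¹ = c + (y + y ∗ c⁻¹) + -c := by
  rw [mul_conj_eq, lam_of_mem h3 hy, lam_of_mem h3 (star_mem_leftSeries_one y _)]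

theorem star_eq_of_mem {z : B} (hz : z ∈ leftSeries B 1) (b : B) :
    z ∗ b = -z + (z * b * z⁻¹ * b⁻¹) + z + (-z + (z * b * z⁻¹ * b⁻¹) ∗ b + z) + ⁅-z, b⁆ := by
  generalize hK : z * b * z⁻¹ * b⁻¹ = K
  have h : z * b = K + (K ∗ b + b + z) := by
    rw [show z * b = K * (b * z) by rw [← hK]; group, mul_of_mem h3 hz, mul_eq_add_lam, lam_add,
      lam_of_mem h3 hz, lam_eq_star_add, add_assoc]
  rw [SkewBrace.star, h, addCommutatorElement_def]
  add_group

theorem mulCommutator_eq_addCommutator {x : B} (hx : x ∈ leftSeries B 1)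
    (hx0 : ∀ d, x ∗ d = 0) (b : B) : x * b * x⁻¹ * b⁻¹ = ⁅x, b⁆ := by
  have hmul : ∀ w, x * w = x + w := fun w => by
    rw [mul_eq_add_lam, lam_eq_star_add, hx0, zero_add]
  rw [show x * b * x⁻¹ * b⁻¹ = x * (b * x⁻¹ * b⁻¹) by group, hmul, inv_of_mem h3 hx,
    mul_conj_of_mem h3 (neg_mem hx), star_neg_left h3 hx, hx0, addCommutatorElement_def]
  add_group

def starComap (H : AddSubgroup B) : AddSubgroup B where
  carrier := {z | z ∈ leftSeries B 1 ∧ ∀ d, z ∗ d ∈ H}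
  zero_mem' := ⟨zero_mem _, fun d => by rw [star_zero_left]; exact zero_mem _⟩
  add_mem' := fun ⟨hx, hxH⟩ ⟨hy, hyH⟩ =>
    ⟨add_mem hx hy, fun d => by rw [star_add_left h3 hy]; exact add_mem (hyH d) (hxH d)⟩
  neg_mem' := fun ⟨hx, hxH⟩ =>
    ⟨neg_mem hx, fun d => by rw [star_neg_left h3 hx]; exact neg_mem (hxH d)⟩

theorem commutator_le_mulCommutatorSeries_succ (n : ℕ) :
    ⁅mulCommutatorSeries B n, leftSeries B 1⁆ ≤ mulCommutatorSeries B (n + 1) := by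
  refine addCommutator_le.mpr fun p hp u hu => ?_
  have hpA := mulCommutatorSeries_le_leftSeries_one n hp
  -- on `B ∗ B` the two group laws agree
  have h : ⁅p, u⁆ = p * u * p⁻¹ * u⁻¹ := by
    rw [inv_of_mem h3 hpA, inv_of_mem h3 hu, mul_of_mem h3 (neg_mem hu),
      mul_of_mem h3 (neg_mem hpA), mul_of_mem h3 hu, addCommutatorElement_def]
  rw [h]
  exact mulCommutator_mem_mulCommutatorSeries_succ hp u

theorem star_mem_of_mem_mulCommutatorSeries_succ {P Q : AddSubgroup B} [P.Normal] [Q.Normal]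
    (hP : ∀ v ∈ P, ∀ d, v ∗ d ∈ P) (hPQ : ⁅P, leftSeries B 1⁆ ≤ Q) {n : ℕ}
    (hn : ∀ x ∈ mulCommutatorSeries B n, ∀ d, x ∗ d ∈ P) :
    ∀ y ∈ mulCommutatorSeries B (n + 1), ∀ d, y ∗ d ∈ Q := by
  have hQ : ∀ u ∈ leftSeries B 1, ∀ v ∈ P, ⁅u, v⁆ ∈ Q := fun u hu v hv =>
    hPQ (by rw [addCommutator_comm]; exact addCommutator_mem_addCommutator hu hv)
  suffices h : mulCommutatorSeries B (n + 1) ≤ starComap h3 Q from fun y hy => (h hy).2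
  refine (closure_le _).mpr ?_
  intro _ hy
  obtain ⟨_, ⟨x, hx, b, rfl⟩, hconj⟩ := AddGroup.mem_addConjugatesOfSet_iff.mp hy
  obtain ⟨c, rfl⟩ := isAddConj_iff.mp hconj
  have hA : x * b * x⁻¹ * b⁻¹ ∈ leftSeries B 1 := isIdeal_leftSeries_one.mul_commutator_mem
    (mulCommutatorSeries_le_leftSeries_one n hx) b
  -- the stars of both summands are conjugates of commutators in `⁅B ∗ B, P⁆`
  have hsplit : c + x * b * x⁻¹ * b⁻¹ + -c = c * (x * b * x⁻¹ * b⁻¹) * c⁻¹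
      + (c + -((x * b * x⁻¹ * b⁻¹) ∗ c⁻¹) + -c) := by
    rw [mul_conj_of_mem h3 hA]
    add_group
  refine ⟨Normal.conj_mem inferInstance _ hA c, fun d => ?_⟩
  rw [hsplit, star_add_left h3 (Normal.conj_mem inferInstance _ (neg_mem
    (star_mem_leftSeries_one _ _)) c), star_mulCommutator h3]
  refine add_mem ?_ ?_
  · set u := -(b ∗ c⁻¹)
    set v := -(x ∗ c⁻¹)
    have hu : c + u + -c ∈ leftSeries B 1 :=
      Normal.conj_mem inferInstance _ (neg_mem (star_mem_leftSeries_one _ _)) c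
    have hv : c + v + -c ∈ P := Normal.conj_mem inferInstance _ (neg_mem (hn x hx _)) c
    have h : c + -⁅u, v⁆ + -c = ⁅c + v + -c, c + u + -c⁆ := by
      simp only [addCommutatorElement_def]
      add_group
    rw [h, star_addCommutator h3 (Normal.conj_mem inferInstance _ (neg_mem
      (star_mem_leftSeries_one _ _)) c) hu]
    exact hQ _ (neg_mem (star_mem_leftSeries_one _ _)) _ (neg_mem (hP _ hv d))
  · rw [star_mul_conj h3, star_mulCommutator h3]
    simpa using Normal.conj_mem inferInstance _
      (hQ _ (neg_mem (star_mem_leftSeries_one b d)) _ (neg_mem (hn x hx d))) (-(c ∗ d))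

theorem star_mem_mulCommutatorSeries :
    ∀ n, ∀ x ∈ mulCommutatorSeries B n, ∀ d, x ∗ d ∈ mulCommutatorSeries B n
  | 0 => fun x _ d => star_mem_leftSeries_one x d
  | n + 1 => star_mem_of_mem_mulCommutatorSeries_succ h3 (star_mem_mulCommutatorSeries n)
      (commutator_le_mulCommutatorSeries_succ h3 n) (star_mem_mulCommutatorSeries n)

theorem isIdeal_mulCommutatorSeries (n : ℕ) : IsIdeal (mulCommutatorSeries B n) :=
  .of_normal (star_mem_mulCommutatorSeries h3 n) fun x hx b => by
    rw [star_eq_zero_of_mem h3 (mulCommutatorSeries_le_leftSeries_one n hx)]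
    exact zero_mem _

theorem mulCommutatorSeries_succ_le (n : ℕ) :
    mulCommutatorSeries B (n + 1) ≤ mulCommutatorSeries B n :=
  normalClosure_le_normal <| by
    rintro _ ⟨x, hx, b, rfl⟩
    exact (isIdeal_mulCommutatorSeries h3 n).mul_commutator_mem hx b

theorem exists_star_eq_add_commutator {n : ℕ} {z : B} (hz : z ∈ mulCommutatorSeries B n)
    (b : B) : ∃ ξ ∈ mulCommutatorSeries B (n + 1), z ∗ b = ξ + ⁅-z, b⁆ := by
  have hK := mulCommutator_mem_mulCommutatorSeries_succ hz b
  have hKb := star_mem_mulCommutatorSeries h3 (n + 1) _ hK b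
  refine ⟨_, add_mem ?_ ?_, star_eq_of_mem h3 (mulCommutatorSeries_le_leftSeries_one n hz) b⟩
  · simpa using Normal.conj_mem inferInstance _ hK (-z)
  · simpa using Normal.conj_mem inferInstance _ hKb (-z)

theorem star_mem_lowerCentralSeries :
    ∀ n, ∀ v ∈ (leftSeries B 1).lowerCentralSeries n, ∀ d,
      v ∗ d ∈ (leftSeries B 1).lowerCentralSeries n
  | 0 => fun v _ d => star_mem_leftSeries_one v d
  | n + 1 => by
    suffices h : (leftSeries B 1).lowerCentralSeries (n + 1) ≤
        starComap h3 ((leftSeries B 1).lowerCentralSeries (n + 1)) from fun v hv => (h hv).2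
    refine addCommutator_le.mpr fun g hg u hu => ⟨?_, fun d => ?_⟩
    · exact lowerCentralSeries_le_self _ (n + 1) (addCommutator_mem_addCommutator hg hu)
    · rw [star_addCommutator h3 (lowerCentralSeries_le_self _ n hg) hu,
        AddSubgroup.lowerCentralSeries_succ, addCommutator_comm]
      exact addCommutator_mem_addCommutator (neg_mem (star_mem_leftSeries_one u d))
        (neg_mem (star_mem_lowerCentralSeries n g hg d))

theorem star_mem_lowerCentralSeries_of_mem_mulCommutatorSeries :
    ∀ n, ∀ x ∈ mulCommutatorSeries B n, ∀ d, x ∗ d ∈ (leftSeries B 1).lowerCentralSeries n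
  | 0 => fun x _ d => star_mem_leftSeries_one x d
  | n + 1 => star_mem_of_mem_mulCommutatorSeries_succ h3 (star_mem_lowerCentralSeries h3 n) le_rfl
      (star_mem_lowerCentralSeries_of_mem_mulCommutatorSeries n)

theorem mulCommutatorSeries_add_le_lowerCentralSeries {N : ℕ}
    (hN : (⊤ : AddSubgroup B).lowerCentralSeries N = ⊥) :
    ∀ r, mulCommutatorSeries B (N + r) ≤ (⊤ : AddSubgroup B).lowerCentralSeries r
  | 0 => le_top
  | r + 1 => normalClosure_le_normal <| by
    rintro _ ⟨x, hx, b, rfl⟩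
    -- elements of `D_N` have trivial `λ`, so their multiplicative commutators are additive ones
    have hx0 : ∀ d, x ∗ d = 0 := fun d => by
      have h : x ∗ d ∈ (⊤ : AddSubgroup B).lowerCentralSeries N := lowerCentralSeries_mono N le_top
        (star_mem_lowerCentralSeries_of_mem_mulCommutatorSeries h3 N x
          (antitone_nat_of_succ_le (mulCommutatorSeries_succ_le h3) (N.le_add_right r) hx) d)
      rwa [hN, mem_bot] at h
    rw [mulCommutator_eq_addCommutator h3 (mulCommutatorSeries_le_leftSeries_one _ hx) hx0]
    exact addCommutator_mem_addCommutator (mulCommutatorSeries_add_le_lowerCentralSeries hN r hx)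
      (mem_top b)

theorem mulCommutatorSeries_eq_bot {N : ℕ}
    (hN : (⊤ : AddSubgroup B).lowerCentralSeries N = ⊥) : mulCommutatorSeries B (N + N) = ⊥ :=
  eq_bot_iff.mpr (hN ▸ mulCommutatorSeries_add_le_lowerCentralSeries h3 hN N)

theorem centralSeries_mulCommutatorSeries_succ {N : ℕ}
    (hN : (⊤ : AddSubgroup B).lowerCentralSeries N = ⊥) (i : ℕ) :
    CentralSeries (mulCommutatorSeries B (i + 1)) (mulCommutatorSeries B i) := by
  refine .of_lowerCentralSeries (mulCommutatorSeries_succ_le h3 i) hN fun k x hx a => ?_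
  obtain ⟨p, hp, q, hq, rfl⟩ := mem_sup_of_normal_left.mp hx
  have hqA := mulCommutatorSeries_le_leftSeries_one i hq.1
  obtain ⟨ξ, hξ, hqa⟩ := exists_star_eq_add_commutator h3 hq.1 a
  refine ⟨?_, ?_⟩
  · rw [star_eq_zero_of_mem h3 (add_mem (mulCommutatorSeries_le_leftSeries_one _ hp) hqA)]
    exact zero_mem _
  · rw [star_add_left h3 hqA, hqa]
    refine add_mem (add_mem (mem_sup_left hξ) (mem_sup_right ⟨?_, ?_⟩))
      (mem_sup_left (star_mem_mulCommutatorSeries h3 _ p hp a))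
    · exact addCommutator_le_left _ ⊤ (addCommutator_mem_addCommutator (neg_mem hq.1) (mem_top a))
    · exact addCommutator_mem_addCommutator (neg_mem hq.2) (mem_top a)

theorem centralSeries_bot_leftSeries_one {N : ℕ}
    (hN : (⊤ : AddSubgroup B).lowerCentralSeries N = ⊥) :
    CentralSeries ⊥ (leftSeries B 1) := by
  have h := CentralSeries.of_succ _ (centralSeries_mulCommutatorSeries_succ h3 hN) (N + N)
  rwa [mulCommutatorSeries_eq_bot h3 hN] at h

end LeftClassTwo

end SkewBrace

open SkewBrace in
/-- A skew brace of nilpotent type with `B³ = 0` is centrally nilpotent. -/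
theorem centrally_nilpotent_of_left_class_two
    (B : Type*) [SkewBrace B]
    [Group.IsNilpotent (Multiplicative B)]
    (h3 : leftSeries B 2 = ⊥) :
    CentrallyNilpotent B := by
  obtain ⟨N, hN⟩ := AddSubgroup.nilpotent_iff_lowerCentralSeries.mp
    (AddGroup.isNilpotent_of_isNilpotent_multiplicative (G := B))
  exact centrallyNilpotent_of_centralSeries
    ((centralSeries_bot_leftSeries_one h3 hN).trans (centralSeries_leftSeries_one_top hN))
end

section
/- Let B be a skew brace of abelian type (i.e. (B,+) is an abelian group) such that B³ = 0 (i.e. B is left nilpotent of class at most 2). Then B is right nilpotent of class at most 3, i.e. B^{(4)} = 0. -/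
namespace SkewBraceAux

variable {B : Type*} [SkewBrace B]

/-- `a · 0 = a` in any skew brace. -/
lemma mul_zero' (a : B) : a * (0 : B) = a := by
  have h := SkewBrace.mul_add_compat a 0 0
  rw [add_zero, sub_eq_add_neg, add_assoc] at h
  exact (neg_add_eq_zero.mp (left_eq_add.mp h)).symm

/-- `1 = 0` in any skew brace. -/
lemma one_eq_zero : (1 : B) = 0 := by
  have h := mul_zero' (1 : B)
  rw [one_mul] at h
  exact h.symm

/-- every `a ∗ b` lies in `B² = leftSeries B 1`. -/
lemma star_mem_B2 (a b : B) : SkewBrace.star a b ∈ SkewBrace.leftSeries B 1 := by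
  have h : SkewBrace.leftSeries B 1 =
      SkewBrace.starSet Set.univ ((⊤ : AddSubgroup B) : Set B) := rfl
  rw [h, SkewBrace.starSet]
  exact AddSubgroup.subset_closure ⟨a, Set.mem_univ a, b, by simp, rfl⟩

/-- From `B³ = 0`: `a ∗ x = 0` whenever `x ∈ B²`. -/
lemma star_B2_eq_zero (h3 : SkewBrace.leftSeries B 2 = ⊥)
    {x : B} (hx : x ∈ SkewBrace.leftSeries B 1) (a : B) : SkewBrace.star a x = 0 := by
  have h2 : SkewBrace.leftSeries B 2 =
      SkewBrace.starSet Set.univ ((SkewBrace.leftSeries B 1 : AddSubgroup B) : Set B) := rfl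
  have hm : SkewBrace.star a x ∈ SkewBrace.leftSeries B 2 := by
    rw [h2, SkewBrace.starSet]
    exact AddSubgroup.subset_closure ⟨a, Set.mem_univ a, x, hx, rfl⟩
  rw [h3] at hm
  exact AddSubgroup.mem_bot.mp hm

/-- From `B³ = 0`: `λ_a` fixes `B²`, i.e. `a · x = a + x` for `x ∈ B²`. -/
lemma mul_of_mem (h3 : SkewBrace.leftSeries B 2 = ⊥)
    {x : B} (hx : x ∈ SkewBrace.leftSeries B 1) (a : B) : a * x = a + x := by
  have h := star_B2_eq_zero h3 hx a
  rw [SkewBrace.star, sub_eq_zero] at h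
  conv_rhs => rw [← h, add_neg_cancel_left]

/-- `x ↦ x ∗ c` is a homomorphism from `(B,·)` to `(B,+)`. -/
lemma phi_mul (h3 : SkewBrace.leftSeries B 2 = ⊥) (habel : ∀ a b : B, a + b = b + a)
    (a b c : B) :
    SkewBrace.star (a * b) c = SkewBrace.star a c + SkewBrace.star b c := by
  letI : AddCommGroup B := { (inferInstance : AddGroup B) with add_comm := habel }
  have hbc := star_mem_B2 b c
  have h1 : b * c = b + (SkewBrace.star b c + c) := by
    simp only [SkewBrace.star]; abel
  have h2 : a * SkewBrace.star b c = a + SkewBrace.star b c := mul_of_mem h3 hbc a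
  have h4 : a * (b * c) = a * b - a + (a * SkewBrace.star b c - a + a * c) := by
    rw [h1, SkewBrace.mul_add_compat, SkewBrace.mul_add_compat]
  rw [h2] at h4
  simp only [SkewBrace.star] at h4 ⊢
  rw [mul_assoc, h4]
  abel

lemma star_one_left (c : B) : SkewBrace.star (1 : B) c = 0 := by
  rw [SkewBrace.star, one_mul, add_sub_cancel_right, one_eq_zero, neg_zero]

lemma star_zero_left (c : B) : SkewBrace.star (0 : B) c = 0 := by
  have h := star_one_left c
  rwa [one_eq_zero] at h

lemma phi_inv (h3 : SkewBrace.leftSeries B 2 = ⊥) (habel : ∀ a b : B, a + b = b + a)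
    (a c : B) : SkewBrace.star a⁻¹ c = -SkewBrace.star a c := by
  have h2 := phi_mul h3 habel a a⁻¹ c
  rw [mul_inv_cancel, star_one_left] at h2
  exact (neg_eq_of_add_eq_zero_right h2.symm).symm

/-- The key pointwise identity: for `t ∈ B²`, `t ∗ w` is the multiplicative
commutator `(w·t)⁻¹·(t·w)`, hence `(t ∗ w) ∗ c = 0`. -/
lemma star_star_eq_zero (h3 : SkewBrace.leftSeries B 2 = ⊥)
    (habel : ∀ a b : B, a + b = b + a)
    {t : B} (ht : t ∈ SkewBrace.leftSeries B 1) (w c : B) :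
    SkewBrace.star (SkewBrace.star t w) c = 0 := by
  letI : AddCommGroup B := { (inferInstance : AddGroup B) with add_comm := habel }
  have hs : SkewBrace.star t w ∈ SkewBrace.leftSeries B 1 := star_mem_B2 t w
  have htw : t * w = t + SkewBrace.star t w + w := by
    simp only [SkewBrace.star]; abel
  have hc : (w * t) * SkewBrace.star t w = t * w := by
    rw [mul_of_mem h3 hs (w * t), mul_of_mem h3 ht w, htw]
    abel
  have hrep : SkewBrace.star t w = (w * t)⁻¹ * (t * w) := by
    rw [← hc, inv_mul_cancel_left]
  rw [hrep, phi_mul h3 habel, phi_inv h3 habel, phi_mul h3 habel, phi_mul h3 habel]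
  abel

/-- The subgroup of elements of `B²` annihilated by `∗` on the left. -/
def K (h3 : SkewBrace.leftSeries B 2 = ⊥) (habel : ∀ a b : B, a + b = b + a) :
    AddSubgroup B where
  carrier := {x | x ∈ SkewBrace.leftSeries B 1 ∧ ∀ c, SkewBrace.star x c = 0}
  zero_mem' := ⟨zero_mem _, fun c => star_zero_left c⟩
  add_mem' := by
    rintro x y ⟨hx, hx0⟩ ⟨hy, hy0⟩
    refine ⟨add_mem hx hy, fun c => ?_⟩
    have hxy : x * y = x + y := mul_of_mem h3 hy x
    rw [← hxy, phi_mul h3 habel, hx0, hy0, add_zero]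
  neg_mem' := by
    rintro x ⟨hx, hx0⟩
    refine ⟨neg_mem hx, fun c => ?_⟩
    have h1 : x * (-x) = 1 := by
      rw [mul_of_mem h3 (neg_mem hx) x, add_neg_cancel, one_eq_zero]
    have hinv : -x = x⁻¹ := eq_inv_of_mul_eq_one_right h1
    rw [hinv, phi_inv h3 habel, hx0, neg_zero]

lemma rightSeries_two_le (h3 : SkewBrace.leftSeries B 2 = ⊥)
    (habel : ∀ a b : B, a + b = b + a) :
    SkewBrace.rightSeries B 2 ≤ K h3 habel := by
  have h : SkewBrace.rightSeries B 2 = AddSubgroup.closure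
      (Set.image2 SkewBrace.star
        ((SkewBrace.rightSeries B 1 : AddSubgroup B) : Set B) Set.univ) := rfl
  rw [h, AddSubgroup.closure_le]
  rintro z ⟨t, ht, w, -, rfl⟩
  have ht' : t ∈ SkewBrace.leftSeries B 1 := by
    have he : SkewBrace.rightSeries B 1 = SkewBrace.leftSeries B 1 := rfl
    rwa [he] at ht
  exact ⟨star_mem_B2 t w, fun c => star_star_eq_zero h3 habel ht' w c⟩

end SkewBraceAux

open SkewBrace in
/-- A skew brace of abelian type with `B³ = 0` satisfies `B^{(4)} = 0`. -/
theorem right_nilpotent_class_three_of_abelian_type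
    (B : Type*) [SkewBrace B]
    (habel : ∀ a b : B, a + b = b + a)
    (h3 : leftSeries B 2 = ⊥) :
    rightSeries B 3 = ⊥ := by
  refine eq_bot_iff.mpr ?_
  have h : rightSeries B 3 = AddSubgroup.closure
      (Set.image2 SkewBrace.star ((rightSeries B 2 : AddSubgroup B) : Set B) Set.univ) := rfl
  rw [h, AddSubgroup.closure_le]
  rintro z ⟨x, hx, c, -, rfl⟩
  have hxK := SkewBraceAux.rightSeries_two_le h3 habel hx
  have hz : star x c = 0 := hxK.2 c
  simp [hz]
end

section
/- Let B be a skew brace such that B³ = 0. Then for every a, b, x ∈ B, [a,b]·∗x = [−(b∗x), −(a∗x)]₊, where [a,b]· = a⁻¹·b⁻¹·a·b is the multiplicative commutator and [u,v]₊ = −u − v + u + v is the additive commutator. -/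
section Aux

open SkewBrace

variable {B : Type*} [SkewBrace B]

lemma sb_mul_zero (a : B) : a * (0:B) = a := by
  have h := SkewBrace.mul_add_compat a 0 0
  rw [add_zero, sub_eq_add_neg, add_assoc] at h
  nth_rewrite 1 [← add_zero (a*(0:B))] at h
  have h2 := add_left_cancel h
  exact (neg_add_eq_zero.mp h2.symm).symm

lemma sb_one_eq_zero : (1 : B) = 0 := by
  have := sb_mul_zero (1 : B)
  rw [one_mul] at this
  exact this.symm

lemma sb_mul_neg (a b : B) : a * (-b) = a - a * b + a := by
  have h := SkewBrace.mul_add_compat a b (-b)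
  rw [add_neg_cancel, sb_mul_zero] at h
  -- h : a = a * b - a + a * (-b)
  have h2 := eq_neg_add_of_add_eq h.symm
  rwa [neg_sub] at h2

lemma sb_star_mul (a b c : B) :
    SkewBrace.star (a * b) c = SkewBrace.star a (SkewBrace.star b c) + SkewBrace.star b c + SkewBrace.star a c := by
  simp only [SkewBrace.star, SkewBrace.mul_add_compat, sb_mul_neg, sub_eq_add_neg, neg_add_rev, neg_neg,
    mul_assoc, add_assoc, neg_add_cancel_left, add_neg_cancel_left]

end Aux

open SkewBrace in
/-- If `B³ = 0`, then `[a,b]· ∗ x = [-(b∗x), -(a∗x)]₊` for all `a, b, x ∈ B`,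
where `[a,b]· = a⁻¹·b⁻¹·a·b` and `[u,v]₊ = -u - v + u + v`. -/
theorem commutator_star (B : Type*) [SkewBrace B]
    (h3 : leftSeries B 2 = ⊥) :
    ∀ a b x : B,
      star (a⁻¹ * b⁻¹ * a * b) x =
        -(-(star b x)) + -(-(star a x)) + -(star b x) + -(star a x) := by
  have h0 : ∀ p q r : B, SkewBrace.star p (SkewBrace.star q r) = 0 := by
    intro p q r
    have hmem : SkewBrace.star q r ∈ leftSeries B 1 := by
      simp only [leftSeries, starSet]
      exact AddSubgroup.subset_closure
        (Set.mem_image2_of_mem (Set.mem_univ q) (by simp [leftSeries]))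
    have hmem2 : SkewBrace.star p (SkewBrace.star q r) ∈ leftSeries B 2 := by
      simp only [leftSeries, starSet]
      exact AddSubgroup.subset_closure (Set.mem_image2_of_mem (Set.mem_univ p) hmem)
    rw [h3] at hmem2
    exact AddSubgroup.mem_bot.mp hmem2
  intro a b x
  have hstar : ∀ p q : B, SkewBrace.star (p * q) x = SkewBrace.star q x + SkewBrace.star p x := by
    intro p q
    rw [sb_star_mul, h0, zero_add]
  have star1 : SkewBrace.star (1 : B) x = 0 := by
    rw [SkewBrace.star, one_mul]
    simp [sb_one_eq_zero]
  have hinv : ∀ p : B, SkewBrace.star p⁻¹ x = -(SkewBrace.star p x) := by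
    intro p
    have h := hstar p p⁻¹
    rw [mul_inv_cancel, star1] at h
    exact eq_neg_of_add_eq_zero_left h.symm
  rw [hstar (a⁻¹ * b⁻¹ * a) b, hstar (a⁻¹ * b⁻¹) a, hstar a⁻¹ b⁻¹, hinv, hinv, neg_neg, neg_neg]
  simp [add_assoc]
end

section
/- Let B be a skew brace such that B³ = 0. Then for every c ∈ B² and every a, x ∈ B, (a + c)∗x = c∗x + a∗x. -/
namespace SkewBrace

variable {B : Type*} [SkewBrace B]

lemma mul_zero' (a : B) : a * (0 : B) = a := by
  have h := mul_add_compat a 0 0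
  rw [add_zero, sub_eq_add_neg, add_assoc] at h
  have h2 : (0:B) = -a + a * 0 := by
    conv at h => lhs; rw [← add_zero (a * (0:B))]
    exact add_left_cancel h
  have h3 := congrArg (a + ·) h2
  simp only [add_zero, ← add_assoc, add_neg_cancel, zero_add] at h3
  exact h3.symm

lemma mul_neg' (a b : B) : a * (-b) = a - a * b + a := by
  have h := mul_add_compat a b (-b)
  rw [add_neg_cancel, mul_zero'] at h
  calc a * (-b) = -(a*b - a) + (a*b - a + a*(-b)) := (neg_add_cancel_left _ _).symm
    _ = -(a*b - a) + a := by rw [← h]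
    _ = a - a*b + a := by rw [neg_sub]

lemma mul_star_eq (a b x : B) :
    SkewBrace.star (a * b) x
      = SkewBrace.star a (SkewBrace.star b x) + SkewBrace.star b x
        + SkewBrace.star a x := by
  have expand : a * (-b + b * x - x) = a - a * b + a * (b * x) - a * x + a := by
    rw [sub_eq_add_neg, mul_add_compat, mul_add_compat, mul_neg', mul_neg']
    simp [sub_eq_add_neg, add_assoc]
  unfold SkewBrace.star
  rw [mul_assoc]
  set s : B := -b + b * x - x with hs
  have h1 : -a + a * s - s + s = -a + a * s := by
    rw [sub_add_cancel]
  rw [add_assoc (-a + a * s - s) s, ← add_assoc (-a + a * s - s) s,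
    h1, expand]
  simp [sub_eq_add_neg, add_assoc]

lemma star_mem_left (a x : B) : SkewBrace.star a x ∈ leftSeries B 1 := by
  show SkewBrace.star a x ∈ starSet Set.univ ((⊤ : AddSubgroup B) : Set B)
  apply AddSubgroup.subset_closure
  exact ⟨a, Set.mem_univ a, x, by simp, rfl⟩

end SkewBrace

open SkewBrace in
/-- If `B³ = 0` and `c ∈ B²`, then `(a + c) ∗ x = c ∗ x + a ∗ x` for all `a, x ∈ B`. -/
theorem add_star (B : Type*) [SkewBrace B]
    (h3 : leftSeries B 2 = ⊥) :
    ∀ c ∈ leftSeries B 1, ∀ a x : B, star (a + c) x = star c x + star a x := by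
  intro c hc a x
  have key : ∀ (b : B) (u : B), u ∈ leftSeries B 1 → SkewBrace.star b u = 0 := by
    intro b u hu
    have hm : SkewBrace.star b u ∈ leftSeries B 2 := by
      apply AddSubgroup.subset_closure
      exact Set.mem_image2_of_mem (Set.mem_univ b) hu
    rw [h3] at hm
    exact hm
  have hac : a * c = a + c := by
    have h0 := key a c hc
    unfold SkewBrace.star at h0
    have h1 := congrArg (fun t => a + (t + c)) h0
    simpa [sub_eq_add_neg, add_assoc] using h1
  rw [← hac, mul_star_eq, key a (SkewBrace.star c x) (star_mem_left c x), zero_add]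
end

section
/- Let B be a skew brace of nilpotent type (i.e. (B,+) is nilpotent, of class m) such that B³ = 0. If B^{(k)} is contained in the centre of the multiplicative group (B,·) for some k ≥ 2, then B^{(k+m+1)} = 0. In particular, if B^{(2)} ⊆ Z(B,·), then B^{(2+m+1)} = 0. -/
namespace SkewBrace

variable {B : Type*} [SkewBrace B]

open scoped commutatorElement

theorem rightSeries_antitone : Antitone (rightSeries B) := by
  refine antitone_nat_of_succ_le fun n => ?_
  induction n with
  | zero => exact le_top
  | succ n ih => exact AddSubgroup.closure_mono (Set.image2_subset ih le_rfl)

theorem rightSeries_one : rightSeries B 1 = leftSeries B 1 := by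
  simp only [rightSeries, leftSeries, AddSubgroup.coe_top]

theorem star_mem_leftSeries_succ (a : B) {x : B} {n : ℕ} (hx : x ∈ leftSeries B n) :
    star a x ∈ leftSeries B (n + 1) :=
  AddSubgroup.subset_closure (Set.mem_image2_of_mem (Set.mem_univ a) hx)

theorem star_eq_zero_of_leftSeries_two_eq_bot (h3 : leftSeries B 2 = ⊥) (a : B) {x : B}
    (hx : x ∈ leftSeries B 1) : star a x = 0 := by
  simpa [h3] using star_mem_leftSeries_succ a hx

theorem mul_eq_add_of_star_eq_zero {a b : B} (h : star a b = 0) : a * b = a + b := by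
  rwa [star, sub_eq_zero, neg_add_eq_iff_eq_add] at h

theorem ofAdd_star_eq_commutator {x b : B} (hx : x ∈ Subgroup.center B) (h : star b x = 0) :
    Multiplicative.ofAdd (star x b) = ⁅(Multiplicative.ofAdd x)⁻¹, Multiplicative.ofAdd b⁆ := by
  rw [star, (Subgroup.mem_center_iff.mp hx b).symm, mul_eq_add_of_star_eq_zero h]
  simp [commutatorElement_def, sub_eq_add_neg, add_assoc, mul_assoc]

theorem rightSeries_add_le_lowerCentralSeries (h3 : leftSeries B 2 = ⊥) {n : ℕ} (hn : 1 ≤ n)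
    (hcentral : (rightSeries B n : Set B) ⊆ Subgroup.center B) (j : ℕ) :
    rightSeries B (n + j) ≤
      ((⊤ : Subgroup (Multiplicative B)).lowerCentralSeries j).toAddSubgroup' := by
  induction j with
  | zero => exact fun x _ => Subgroup.mem_top (Multiplicative.ofAdd x)
  | succ j ih =>
    refine (AddSubgroup.closure_le _).2 ?_
    rintro _ ⟨x, hx, b, -, rfl⟩
    have hxn : x ∈ rightSeries B n := rightSeries_antitone (Nat.le_add_right n j) hx
    have hx1 : x ∈ leftSeries B 1 := rightSeries_one (B := B) ▸ rightSeries_antitone hn hxn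
    change Multiplicative.ofAdd (star x b) ∈
      (⊤ : Subgroup (Multiplicative B)).lowerCentralSeries (j + 1)
    rw [ofAdd_star_eq_commutator (hcentral hxn) (star_eq_zero_of_leftSeries_two_eq_bot h3 b hx1),
      Subgroup.lowerCentralSeries_succ]
    exact Subgroup.commutator_mem_commutator (inv_mem (ih hx)) (Subgroup.mem_top _)

theorem rightSeries_add_nilpotencyClass_eq_bot [Group.IsNilpotent (Multiplicative B)]
    (h3 : leftSeries B 2 = ⊥) {n : ℕ} (hn : 1 ≤ n)
    (hcentral : (rightSeries B n : Set B) ⊆ Subgroup.center B) :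
    rightSeries B (n + Group.nilpotencyClass (Multiplicative B)) = ⊥ := by
  refine eq_bot_iff.2 fun x hx => ?_
  have hx' := rightSeries_add_le_lowerCentralSeries h3 hn hcentral _ hx
  rw [Subgroup.mem_toAddSubgroup', Subgroup.lowerCentralSeries_nilpotencyClass] at hx'
  simpa using hx'

end SkewBrace

open SkewBrace in
/-- If `B` is of nilpotent type with `(B,+)` of class `m`, `B³ = 0`, and
`B^{(k)} ⊆ Z(B,·)` for some `k ≥ 2`, then `B^{(k+m+1)} = 0`.
(`rightSeries B n = B^{(n+1)}`, so `B^{(k)} = rightSeries B (k-1)` and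
`B^{(k+m+1)} = rightSeries B (k+m)`.) -/
theorem right_nilpotent_of_rightSeries_central (B : Type*) [SkewBrace B] (m k : ℕ)
    [Group.IsNilpotent (Multiplicative B)]
    (hm : Group.nilpotencyClass (Multiplicative B) = m)
    (h3 : leftSeries B 2 = ⊥)
    (hk : 2 ≤ k)
    (hcentral : ∀ x ∈ rightSeries B (k - 1), x ∈ Subgroup.center B) :
    rightSeries B (k + m) = ⊥ := by
  have hzero := rightSeries_add_nilpotencyClass_eq_bot h3 (by omega) hcentral
  rw [hm] at hzero
  exact eq_bot_iff.2 (hzero ▸ rightSeries_antitone (by omega))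
end

section
/- Let G and H be groups, let λ : G → Aut(H) be a group homomorphism (written g ↦ λ_g), and let δ : G → H be a bijective derivation associated with λ, i.e. δ(x·y) = δ(x)·λ_x(δ(y)) for all x, y ∈ G. Then defining on H the operation a ∘ b = δ(δ⁻¹(a)·δ⁻¹(b)) = a·λ_{δ⁻¹(a)}(b) makes (H, ·, ∘) a skew brace, i.e. (H,∘) is a group and a ∘ (b·c) = (a ∘ b)·a⁻¹·(a ∘ c) for all a, b, c ∈ H (where the group operation of H plays the role of the additive operation). -/
/-- If `δ : G → H` is a bijective derivation associated with an action
`φ : G →* Aut(H)` (i.e. `δ(x·y) = δ(x)·φ_x(δ(y))`), then the operation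
`a ∘ b = δ(δ⁻¹(a)·δ⁻¹(b))` makes `(H, ·, ∘)` a skew brace: `(H,∘)` is a group
and `a ∘ (b·c) = (a ∘ b)·a⁻¹·(a ∘ c)`, where the group operation of `H` plays
the role of the additive operation. -/
theorem skewBrace_of_bijective_derivation
    {G H : Type*} [Group G] [Group H] (φ : G →* MulAut H)
    (δ : G ≃ H) (hδ : ∀ x y : G, δ (x * y) = δ x * φ x (δ y)) :
    let op : H → H → H := fun a b => δ (δ.symm a * δ.symm b)
    (∀ a b c : H, op (op a b) c = op a (op b c)) ∧
    (∀ a : H, op (δ 1) a = a) ∧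
    (∀ a : H, op a (δ 1) = a) ∧
    (∀ a : H, op (δ (δ.symm a)⁻¹) a = δ 1) ∧
    (∀ a : H, op a (δ (δ.symm a)⁻¹) = δ 1) ∧
    (∀ a b : H, op a b = a * φ (δ.symm a) b) ∧
    (∀ a b c : H, op a (b * c) = op a b * a⁻¹ * op a c) := by
  intro op
  have hop : ∀ a b : H, δ.symm (op a b) = δ.symm a * δ.symm b := by
    intro a b; simp [op]
  refine ⟨?_, ?_, ?_, ?_, ?_, ?_, ?_⟩
  · intro a b c
    simp only [op, hop, Equiv.symm_apply_apply, mul_assoc]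
  · intro a; simp [op]
  · intro a; simp [op]
  · intro a; simp [op]
  · intro a; simp [op]
  · intro a b
    have := hδ (δ.symm a) (δ.symm b)
    simpa [op] using this
  · intro a b c
    have h6 : ∀ x y : H, op x y = x * φ (δ.symm x) y := by
      intro x y
      have := hδ (δ.symm x) (δ.symm y)
      simpa [op] using this
    simp [h6, map_mul, mul_assoc]
end

section
/- There exists a skew brace B of order 6 such that B³ = 0 (so B is left nilpotent of class at most 2) but B is not right nilpotent; indeed B^{(3)} = B^{(2)} ≠ 0. (In particular, the hypothesis of nilpotent type cannot be removed: here (B,+) is isomorphic to the symmetric group of degree 3, which is not nilpotent.) -/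
/-! ### The example: a skew brace structure on a 6-element set -/

/-- The underlying type of our example skew brace: a copy of `Fin 6`. -/
def B6 : Type := Fin 6

instance : DecidableEq B6 := inferInstanceAs (DecidableEq (Fin 6))
instance : Fintype B6 := inferInstanceAs (Fintype (Fin 6))

namespace B6

/-- View an element of `Fin 6` as an element of `B6`. -/
def el (n : Fin 6) : B6 := n

/-- Addition table: `(B6, +)` is the symmetric group `S₃`. -/
def addT : Fin 6 → Fin 6 → Fin 6 :=
  ![![0,1,2,3,4,5],![1,0,4,5,2,3],![2,3,0,1,5,4],![3,2,5,4,0,1],![4,5,1,0,3,2],![5,4,3,2,1,0]]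

/-- Negation table. -/
def negT : Fin 6 → Fin 6 := ![0,1,2,4,3,5]

/-- Multiplication table: `(B6, ·)` is another group structure. -/
def mulT : Fin 6 → Fin 6 → Fin 6 :=
  ![![0,1,2,3,4,5],![1,0,4,5,2,3],![2,4,3,1,5,0],![3,5,1,4,0,2],![4,2,5,0,3,1],![5,3,0,2,1,4]]

/-- Inverse table for `mulT`. -/
def invT : Fin 6 → Fin 6 := ![0,1,5,4,3,2]

instance : Add B6 := ⟨fun a b => el (addT a b)⟩
instance : Zero B6 := ⟨el 0⟩
instance : Neg B6 := ⟨fun a => el (negT a)⟩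
instance : Mul B6 := ⟨fun a b => el (mulT a b)⟩
instance : One B6 := ⟨el 0⟩
instance : Inv B6 := ⟨fun a => el (invT a)⟩

instance : AddGroup B6 :=
  AddGroup.ofLeftAxioms (by decide) (by decide) (by decide)

instance : Group B6 :=
  Group.ofLeftAxioms (by decide) (by decide) (by decide)

instance instSkewBrace : SkewBrace B6 where
  mul_add_compat := by decide

open SkewBrace

/-- The subgroup `{0, 3, 4}` of `(B6, +)` (a copy of `ℤ/3`). -/
def R : AddSubgroup B6 where
  carrier := {x | x = el 0 ∨ x = el 3 ∨ x = el 4}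
  add_mem' := by intro a b ha hb; revert ha hb; revert a b; decide
  zero_mem' := by left; rfl
  neg_mem' := by intro a ha; revert ha; revert a; decide

lemma starSet_univ_univ : starSet (Set.univ : Set B6) Set.univ = R := by
  apply le_antisymm
  · apply AddSubgroup.closure_le _ |>.2
    rintro x ⟨a, -, b, -, rfl⟩
    show star a b = el 0 ∨ star a b = el 3 ∨ star a b = el 4
    revert a b; decide
  · intro x hx
    rcases hx with h | h | h <;> subst h
    · exact zero_mem _
    · exact AddSubgroup.subset_closure ⟨el 3, trivial, el 1, trivial, by decide⟩
    · exact AddSubgroup.subset_closure ⟨el 2, trivial, el 1, trivial, by decide⟩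

lemma starSet_R_univ : starSet (R : Set B6) Set.univ = R := by
  apply le_antisymm
  · apply AddSubgroup.closure_le _ |>.2
    rintro x ⟨a, ha, b, -, rfl⟩
    have ha' : a = el 0 ∨ a = el 3 ∨ a = el 4 := ha
    show star a b = el 0 ∨ star a b = el 3 ∨ star a b = el 4
    clear ha
    revert ha'; revert a b; decide
  · intro x hx
    rcases hx with h | h | h <;> subst h
    · exact zero_mem _
    · exact AddSubgroup.subset_closure ⟨el 3, Or.inr (Or.inl rfl), el 1, trivial, by decide⟩
    · exact AddSubgroup.subset_closure ⟨el 4, Or.inr (Or.inr rfl), el 1, trivial, by decide⟩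

lemma leftSeries_one : leftSeries B6 1 = R := by
  show starSet Set.univ ((⊤ : AddSubgroup B6) : Set B6) = R
  rw [AddSubgroup.coe_top]
  exact starSet_univ_univ

lemma leftSeries_two : leftSeries B6 2 = ⊥ := by
  rw [eq_bot_iff]
  show starSet Set.univ ((leftSeries B6 1 : AddSubgroup B6) : Set B6) ≤ ⊥
  rw [leftSeries_one]
  apply AddSubgroup.closure_le _ |>.2
  rintro x ⟨a, -, b, hb, rfl⟩
  have hb' : b = el 0 ∨ b = el 3 ∨ b = el 4 := hb
  rw [SetLike.mem_coe, AddSubgroup.mem_bot]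
  clear hb
  revert hb'; revert a b; decide

lemma rightSeries_succ_eq (n : ℕ) : rightSeries B6 (n + 1) = R := by
  induction n with
  | zero =>
    show starSet ((⊤ : AddSubgroup B6) : Set B6) Set.univ = R
    rw [AddSubgroup.coe_top]
    exact starSet_univ_univ
  | succ n ih =>
    show starSet ((rightSeries B6 (n+1) : AddSubgroup B6) : Set B6) Set.univ = R
    rw [ih]
    exact starSet_R_univ

lemma R_ne_bot : R ≠ ⊥ := by
  intro h
  have : el 3 ∈ R := Or.inr (Or.inl rfl)
  rw [h] at this
  exact absurd (AddSubgroup.mem_bot.1 this) (by decide)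

/-- The explicit isomorphism `(B6, +) ≃ S₃`. -/
def toPerm : Fin 6 → Equiv.Perm (Fin 3) :=
  ![1, Equiv.swap 1 2, Equiv.swap 0 1, finRotate 3, (finRotate 3)^2, Equiv.swap 0 2]

def homToPerm : Multiplicative B6 →* Equiv.Perm (Fin 3) where
  toFun a := toPerm (a.toAdd : Fin 6)
  map_one' := by decide
  map_mul' := by decide

lemma homToPerm_bijective : Function.Bijective homToPerm := by
  have hinj : Function.Injective homToPerm := by
    intro a b h
    revert h
    revert a b
    decide
  exact (Fintype.bijective_iff_injective_and_card _).2 ⟨hinj, by decide⟩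

end B6

open SkewBrace in
/-- There is a skew brace `B` of order `6` with `B³ = 0` which is not right nilpotent;
indeed `B^{(3)} = B^{(2)} ≠ 0`, and `(B,+)` is isomorphic to the symmetric group of
degree `3`. (`leftSeries B n = B^{n+1}`, `rightSeries B n = B^{(n+1)}`.) -/
theorem exists_left_class_two_not_right_nilpotent :
    ∃ (B : Type) (_inst : SkewBrace B),
      Nat.card B = 6 ∧
      Nonempty (Multiplicative B ≃* Equiv.Perm (Fin 3)) ∧
      leftSeries B 2 = ⊥ ∧
      (¬ ∃ n : ℕ, rightSeries B n = ⊥) ∧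
      rightSeries B 2 = rightSeries B 1 ∧
      rightSeries B 1 ≠ ⊥ := by
  refine ⟨B6, B6.instSkewBrace, ?_, ?_, ?_, ?_, ?_, ?_⟩
  · rw [Nat.card_eq_fintype_card]; rfl
  · exact ⟨MulEquiv.ofBijective B6.homToPerm B6.homToPerm_bijective⟩
  · exact B6.leftSeries_two
  · rintro ⟨n, hn⟩
    match n, hn with
    | 0, hn =>
      have : (B6.el 3 : B6) ∈ (⊤ : AddSubgroup B6) := trivial
      rw [show (⊤ : AddSubgroup B6) = ⊥ from hn] at this
      exact absurd (AddSubgroup.mem_bot.1 this) (by decide)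
    | (n+1), hn => exact B6.R_ne_bot (B6.rightSeries_succ_eq n ▸ hn)
  · rw [B6.rightSeries_succ_eq 1, B6.rightSeries_succ_eq 0]
  · rw [B6.rightSeries_succ_eq 0]; exact B6.R_ne_bot
end
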